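/- arXiv:2311.13516 — 3 statements merged into one kernel-verified Lean document; each statement's English description precedes it below -/
import Mathlib

section
/- If a group G is discriminated by GL_n(ℤ_p) for some n, then G is linear over a field: there exist a field K and an injective group homomorphism G → GL_n(K). -/
open scoped MatrixGroups
open Filter

private lemma germ_coe_sum {α β : Type} [AddCommMonoid β] (l : Filter α) {ι : Type}
    (s : Finset ι) (f : ι → α → β) :
    ((∑ k ∈ s, f k : α → β) : Filter.Germ l β) = ∑ k ∈ s, ((f k : α → β) : Filter.Germ l β) :=
  map_sum (Filter.Germ.coeAddHom l) f s

/-- If a group `G` is discriminated by `GL n ℤ_[p]` for some `n`, then `G` is linear over a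
field: there exist a field `K` and an injective group homomorphism `G → GL n K`. -/
theorem stmt_2 (p : ℕ) [Fact p.Prime] (n : ℕ) {G : Type} [Group G]
    (hdisc : ∀ S : Finset G, ∃ h : G →* GL (Fin n) ℤ_[p], Set.InjOn h ↑S) :
    ∃ (K : Type) (_ : Field K) (f : G →* GL (Fin n) K), Function.Injective f := by
  classical
  choose h hinj using hdisc
  let U : Ultrafilter (Finset G) := Ultrafilter.of atTop
  let K := (U : Filter (Finset G)).Germ ℚ_[p]
  letI : Field K := Filter.Germ.instField
  let ρ : ℤ_[p] →+* ℚ_[p] := PadicInt.Coe.ringHom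
  let R : ((Finset G) → Matrix (Fin n) (Fin n) ℚ_[p]) →+* Matrix (Fin n) (Fin n) K :=
    { toFun := fun F => Matrix.of fun i j => ((fun S => F S i j : (Finset G) → ℚ_[p]) : K)
      map_one' := by
        ext i j
        show ((fun S => (1 : Matrix (Fin n) (Fin n) ℚ_[p]) i j : (Finset G) → ℚ_[p]) : K)
          = (1 : Matrix (Fin n) (Fin n) K) i j
        rcases eq_or_ne i j with rfl | hij
        · simp only [Matrix.one_apply_eq]
          exact (Filter.Germ.coe_one : ((1 : Finset G → ℚ_[p]) : K) = 1)
        · simp only [Matrix.one_apply_ne hij]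
          exact (Filter.Germ.coe_zero : ((0 : Finset G → ℚ_[p]) : K) = 0)
      map_mul' := by
        intro F F'
        ext i j
        show ((fun S => (F S * F' S) i j : (Finset G) → ℚ_[p]) : K) = _
        rw [show (fun S => (F S * F' S) i j)
            = ∑ k : Fin n, ((fun S => F S i k) * (fun S => F' S k j) : (Finset G) → ℚ_[p]) by
          funext S; simp [Matrix.mul_apply]]
        rw [germ_coe_sum]
        simp only [Matrix.mul_apply, Matrix.of_apply]
        exact Finset.sum_congr rfl fun k _ => Filter.Germ.coe_mul _ _
      map_zero' := by
        ext i j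
        exact Filter.Germ.coe_zero
      map_add' := by
        intro F F'
        ext i j
        exact Filter.Germ.coe_add _ _ }
  have hρ : Function.Injective ρ := Subtype.coe_injective
  let F : G → (Finset G) → Matrix (Fin n) (Fin n) ℚ_[p] :=
    fun g S => ρ.mapMatrix (((h S) g : Matrix (Fin n) (Fin n) ℤ_[p]))
  have hFinv : ∀ g, F g * F g⁻¹ = 1 := by
    intro g
    funext S
    show ρ.mapMatrix (((h S) g : Matrix (Fin n) (Fin n) ℤ_[p]))
        * ρ.mapMatrix (((h S) g⁻¹ : GL (Fin n) ℤ_[p]) : Matrix (Fin n) (Fin n) ℤ_[p]) = 1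
    rw [map_inv (h S), ← map_mul, ← Units.val_mul, mul_inv_cancel, Units.val_one, map_one]
  have hFinv' : ∀ g, F g⁻¹ * F g = 1 := by
    intro g
    funext S
    show ρ.mapMatrix (((h S) g⁻¹ : GL (Fin n) ℤ_[p]) : Matrix (Fin n) (Fin n) ℤ_[p])
        * ρ.mapMatrix (((h S) g : Matrix (Fin n) (Fin n) ℤ_[p])) = 1
    rw [map_inv (h S), ← map_mul, ← Units.val_mul, inv_mul_cancel, Units.val_one, map_one]
  let f : G →* GL (Fin n) K :=
    { toFun := fun g =>
        ⟨R (F g), R (F g⁻¹),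
          by rw [← map_mul, hFinv, map_one], by rw [← map_mul, hFinv', map_one]⟩
      map_one' := by
        apply Units.ext
        show R (F 1) = 1
        rw [show F 1 = 1 by
          funext S
          show ρ.mapMatrix (((h S) (1 : G) : Matrix (Fin n) (Fin n) ℤ_[p])) = 1
          rw [map_one (h S), Units.val_one, map_one]]
        exact map_one R
      map_mul' := by
        intro g₁ g₂
        apply Units.ext
        show R (F (g₁ * g₂)) = R (F g₁) * R (F g₂)
        rw [← map_mul]
        congr 1
        funext S
        show ρ.mapMatrix (((h S) (g₁ * g₂) : Matrix (Fin n) (Fin n) ℤ_[p]))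
          = ρ.mapMatrix (((h S) g₁ : Matrix (Fin n) (Fin n) ℤ_[p]))
            * ρ.mapMatrix (((h S) g₂ : Matrix (Fin n) (Fin n) ℤ_[p]))
        rw [map_mul (h S), Units.val_mul, map_mul] }
  refine ⟨K, inferInstance, f, ?_⟩
  intro g₁ g₂ hgg
  have hval : R (F g₁) = R (F g₂) := congrArg Units.val hgg
  have hev : ∀ᶠ S in (U : Filter (Finset G)), ∀ i j, F g₁ S i j = F g₂ S i j :=
    eventually_all.2 fun i => eventually_all.2 fun j =>
      Filter.Germ.coe_eq.1 (Matrix.ext_iff.2 hval i j)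
  have hmem : ∀ᶠ S in (U : Filter (Finset G)), ({g₁, g₂} : Finset G) ≤ S :=
    Ultrafilter.of_le atTop (Filter.mem_atTop ({g₁, g₂} : Finset G))
  obtain ⟨S, hS, hle⟩ := (hev.and hmem).exists
  have h12 : (h S) g₁ = (h S) g₂ := by
    apply Units.ext
    ext i j
    exact hρ (hS i j)
  exact hinj S (Finset.mem_coe.2 (hle (by simp))) (Finset.mem_coe.2 (hle (by simp))) h12
end

section
/- If a group G is discriminated by a group H, then every existential first-order sentence (in the language of groups) satisfied by G is satisfied by H. -/
/-- If `G` is discriminated by `H`, then every existential sentence in the language of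
groups (an existential quantifier over a finite disjunction of finite conjunctions of
word equations and word inequations) satisfied by `G` is satisfied by `H`. -/
theorem stmt_3 {G H : Type*} [Group G] [Group H]
    (hdisc : ∀ S : Finset G, ∃ h : G →* H, Set.InjOn h ↑S)
    (n K : ℕ) (I J : Fin K → ℕ)
    (u : ∀ k : Fin K, Fin (I k) → FreeGroup (Fin n))
    (v : ∀ k : Fin K, Fin (J k) → FreeGroup (Fin n))
    (hG : ∃ x : Fin n → G, ∃ k : Fin K,
      (∀ i, FreeGroup.lift x (u k i) = 1) ∧ (∀ j, FreeGroup.lift x (v k j) ≠ 1)) :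
    ∃ y : Fin n → H, ∃ k : Fin K,
      (∀ i, FreeGroup.lift y (u k i) = 1) ∧ (∀ j, FreeGroup.lift y (v k j) ≠ 1) := by
  obtain ⟨x, k, hu, hv⟩ := hG
  classical
  obtain ⟨h, hinj⟩ := hdisc (insert 1 (Finset.image (fun j => FreeGroup.lift x (v k j))
    Finset.univ))
  have key : ∀ w : FreeGroup (Fin n), FreeGroup.lift (h ∘ x) w = h (FreeGroup.lift x w) := by
    intro w
    have : FreeGroup.lift (h ∘ x) = h.comp (FreeGroup.lift x) := by
      ext a
      simp
    rw [this]; rfl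
  refine ⟨h ∘ x, k, fun i => ?_, fun j hj => ?_⟩
  · rw [key, hu i, map_one]
  · rw [key] at hj
    apply hv j
    apply hinj ?_ ?_ (by rw [hj, map_one])
    · simp
    · simp
end

section
/- Let R be an integral domain and P ⊆ R a subring such that R is integral over P. If a family of ideals {p_a} of P has intersection zero and, for each a, q_a is a prime of R lying over p_a, then one can choose the q_a so that their intersection is zero. In particular, if the p_a are kernels of a separating family of homomorphisms from P, the lifted quotients R/q_a separate points of R. -/
/-- Let `R` be an integral domain and `P ⊆ R` a subring (an injective algebra) with `R`
integral over `P`.  If a family of prime ideals `p a` of `P` has intersection zero, then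
one can choose, for each `a`, a prime `q a` of `R` lying over `p a` such that the
intersection of the `q a` is zero. -/
theorem stmt_7 {P R : Type*} [CommRing P] [CommRing R] [IsDomain R] [Algebra P R]
    (hinj : Function.Injective (algebraMap P R)) [Algebra.IsIntegral P R]
    {A : Type*} (p : A → Ideal P) (hp : ∀ a, (p a).IsPrime)
    (hzero : (⨅ a, p a) = ⊥) :
    ∃ q : A → Ideal R, (∀ a, (q a).IsPrime) ∧
      (∀ a, (q a).comap (algebraMap P R) = p a) ∧ (⨅ a, q a) = ⊥ := by
  haveI : Nontrivial P := (algebraMap P R).domain_nontrivial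
  have hex : ∀ a, ∃ Q : Ideal R, Q.IsPrime ∧ Q.comap (algebraMap P R) = p a := by
    intro a
    haveI := hp a
    obtain ⟨Q, -, hQ, hQ'⟩ := Ideal.exists_ideal_over_prime_of_isIntegral (p a) ⊥
      (by rw [Ideal.comap_bot_of_injective _ hinj]; exact bot_le)
    exact ⟨Q, hQ, hQ'⟩
  choose q hq hq' using hex
  refine ⟨q, hq, hq', ?_⟩
  apply Ideal.eq_bot_of_comap_eq_bot (R := P)
  rw [Ideal.comap_iInf]
  simpa [hq'] using hzero
end
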